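/- arXiv:2104.03649 — 2 statements merged into one kernel-verified Lean document; each statement's English description precedes it below -/
import Mathlib

section
/- Let n ≥ 1, let B be an n×n real matrix that is nonnegative, column-stochastic, and irreducible, and let β ∈ (0,1). Set B_β = (1−β)I + βB. Let π ∈ ℝⁿ be a nonnegative vector with entries summing to 1 and Bπ = π. Then the spectral radius of B_β − π𝟏ᵀ is strictly less than 1, where 𝟏 ∈ ℝⁿ is the all-ones vector. -/
/-- The spectral radius of a real square matrix: the maximum modulus of the complex
roots of its characteristic polynomial. -/
noncomputable def specRad {n : ℕ} (M : Matrix (Fin n) (Fin n) ℝ) : ℝ :=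
  sSup {x : ℝ | ∃ z ∈ (M.map (Complex.ofReal : ℝ → ℂ)).charpoly.roots, ‖z‖ = x}

/-!
Write `B_β = (1 - β) I + β B`. Since `𝟏ᵀ B_β = 𝟏ᵀ` and `𝟏ᵀ π = 1`, the matrix `B_β - π 𝟏ᵀ` has
zero column sums, so an eigenvector `v` for an eigenvalue `z ≠ 0` satisfies `𝟏ᵀ v = 0`. Then
`π 𝟏ᵀ v = 0`, so `v` is an eigenvector of `B_β`, hence of `B` for some `μ` with
`z = (1 - β) + β μ`. Column-stochasticity gives `|μ| ≤ 1` (compare `ℓ¹` norms), and strict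
convexity of the unit disc gives `|z| < 1` unless `μ = 1`. That case is excluded by
irreducibility: the positive part of a real fixed vector of `B` is again fixed, and a nonnegative
fixed vector with one positive entry is positive everywhere, so a real fixed vector with zero sum
vanishes.
-/

open Matrix Finset

namespace Matrix

variable {ι : Type*}

theorem map_ofReal_sub_of (A : Matrix ι ι ℝ) (π : ι → ℝ) :
    (A - of fun i _ ↦ π i).map Complex.ofReal =
      A.map Complex.ofReal - of fun i _ ↦ (π i : ℂ) := by
  ext i j
  simp

variable [Fintype ι]

theorem sum_eq_zero_and_mulVec_eq_smul_of_sub_mulVec_eq_smul {K : Type*} [Field K]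
    {A : Matrix ι ι K} (hA : ∀ j, ∑ i, A i j = 1) {π : ι → K} (hπ : ∑ i, π i = 1)
    {v : ι → K} {z : K} (hz : z ≠ 0) (h : (A - of fun i _ ↦ π i) *ᵥ v = z • v) :
    ∑ i, v i = 0 ∧ A *ᵥ v = z • v := by
  have hP : (of fun i _ ↦ π i) *ᵥ v = (∑ i, v i) • π := by
    ext i
    simp [mulVec, dotProduct, mul_sum, mul_comm]
  have hA_sum : ∑ i, (A *ᵥ v) i = ∑ i, v i := by
    simp only [mulVec, dotProduct]
    rw [sum_comm]
    simp [← sum_mul, hA]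
  have hz_sum : z * ∑ i, v i = 0 := by
    have := congrArg (fun w ↦ ∑ i, w i) h
    simp only [sub_mulVec, hP, Pi.sub_apply, Pi.smul_apply, smul_eq_mul, sum_sub_distrib,
      ← mul_sum, hA_sum, hπ] at this
    linear_combination -this
  have hv_sum : ∑ i, v i = 0 := (mul_eq_zero.1 hz_sum).resolve_left hz
  refine ⟨hv_sum, ?_⟩
  rwa [sub_mulVec, hP, hv_sum, zero_smul, sub_zero] at h

theorem re_map_ofReal_mulVec (B : Matrix ι ι ℝ) (v : ι → ℂ) (i : ι) :
    ((B.map Complex.ofReal *ᵥ v) i).re = (B *ᵥ fun j ↦ (v j).re) i := by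
  simp [mulVec, dotProduct, Complex.re_sum]

theorem im_map_ofReal_mulVec (B : Matrix ι ι ℝ) (v : ι → ℂ) (i : ι) :
    ((B.map Complex.ofReal *ᵥ v) i).im = (B *ᵥ fun j ↦ (v j).im) i := by
  simp [mulVec, dotProduct, Complex.im_sum]

theorem norm_map_ofReal_mulVec_le {B : Matrix ι ι ℝ} (hB : ∀ i j, 0 ≤ B i j) (v : ι → ℂ)
    (i : ι) : ‖(B.map Complex.ofReal *ᵥ v) i‖ ≤ (B *ᵥ fun j ↦ ‖v j‖) i := by
  calc ‖(B.map Complex.ofReal *ᵥ v) i‖ ≤ ∑ j, ‖(B i j : ℂ) * v j‖ := norm_sum_le _ _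
    _ = (B *ᵥ fun j ↦ ‖v j‖) i := by
      simp [mulVec, dotProduct, Complex.norm_real, abs_of_nonneg (hB i _)]

variable [DecidableEq ι]

theorem exists_mulVec_eq_smul_of_mem_roots_charpoly {K : Type*} [Field K] {A : Matrix ι ι K}
    {z : K} (hz : z ∈ A.charpoly.roots) : ∃ v ≠ 0, A *ᵥ v = z • v := by
  have hz : z ∈ spectrum K A.toLin' := by
    rw [spectrum_toLin', mem_spectrum_iff_isRoot_charpoly]
    exact (Polynomial.mem_roots A.charpoly_monic.ne_zero).1 hz
  obtain ⟨v, hv⟩ := (Module.End.hasEigenvalue_iff_mem_spectrum.2 hz).exists_hasEigenvector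
  exact ⟨v, hv.2, hv.apply_eq_smul⟩

theorem pow_mulVec_eq_self {R : Type*} [Semiring R] {A : Matrix ι ι R} {u : ι → R}
    (h : A *ᵥ u = u) (k : ℕ) : (A ^ k) *ᵥ u = u := by
  induction k with
  | zero => simp
  | succ k ih => rw [pow_succ', ← mulVec_mulVec, ih, h]

variable {B : Matrix ι ι ℝ}

section RealVector

variable {u : ι → ℝ}

theorem IsIrreducible.pos_of_mulVec_eq_self (hB : B.IsIrreducible) (hu : 0 ≤ u)
    (hfix : B *ᵥ u = u) {j : ι} (hj : 0 < u j) (i : ι) : 0 < u i := by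
  obtain ⟨k, -, hk⟩ := (isIrreducible_iff_exists_pow_pos hB.nonneg).1 hB i j
  calc 0 < (B ^ k) i j * u j := mul_pos hk hj
    _ ≤ ∑ l, (B ^ k) i l * u l :=
      single_le_sum (f := fun l ↦ (B ^ k) i l * u l)
        (fun l _ ↦ mul_nonneg (pow_apply_nonneg hB.nonneg k i l) (hu l)) (mem_univ j)
    _ = u i := congrFun (pow_mulVec_eq_self hfix k) i

theorem mulVec_posPart_eq_self (hB : B ∈ colStochastic ℝ ι) (hfix : B *ᵥ u = u) :
    B *ᵥ u⁺ = u⁺ := by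
  have hle : ∀ i ∈ univ, u⁺ i ≤ (B *ᵥ u⁺) i := by
    intro i _
    rw [Pi.posPart_apply]
    refine sup_le ?_ (nonneg_mulVec_of_mem_colStochastic hB (posPart_nonneg u) i)
    calc u i = (B *ᵥ u) i := by rw [hfix]
      _ ≤ (B *ᵥ u⁺) i :=
        sum_le_sum fun j _ ↦ mul_le_mul_of_nonneg_left (le_posPart _) (hB.1 i j)
  funext i
  exact ((sum_eq_sum_iff_of_le hle).1 (sum_mulVec_of_mem_colStochastic hB).symm i
    (mem_univ i)).symm

theorem IsIrreducible.nonpos_of_mulVec_eq_self_of_sum_eq_zero (hI : B.IsIrreducible)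
    (hS : B ∈ colStochastic ℝ ι) (hfix : B *ᵥ u = u) (hsum : ∑ i, u i = 0) : u ≤ 0 := by
  intro j
  by_contra! hj
  have hpos : ∀ i, 0 < u⁺ i :=
    hI.pos_of_mulVec_eq_self (posPart_nonneg u) (mulVec_posPart_eq_self hS hfix)
      (j := j) (by simpa using hj)
  have : 0 < ∑ i, u i := sum_pos (fun i _ ↦ by simpa using hpos i) ⟨j, mem_univ j⟩
  linarith

theorem IsIrreducible.eq_zero_of_mulVec_eq_self_of_sum_eq_zero (hI : B.IsIrreducible)
    (hS : B ∈ colStochastic ℝ ι) (hfix : B *ᵥ u = u) (hsum : ∑ i, u i = 0) : u = 0 :=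
  le_antisymm (hI.nonpos_of_mulVec_eq_self_of_sum_eq_zero hS hfix hsum) <| neg_nonpos.1 <|
    hI.nonpos_of_mulVec_eq_self_of_sum_eq_zero hS (by rw [mulVec_neg, hfix]) (by simp [hsum])

end RealVector

theorem IsIrreducible.eq_zero_of_map_ofReal_mulVec_eq_self_of_sum_eq_zero
    (hI : B.IsIrreducible) (hS : B ∈ colStochastic ℝ ι) {v : ι → ℂ}
    (hfix : B.map Complex.ofReal *ᵥ v = v) (hsum : ∑ i, v i = 0) : v = 0 := by
  have hre := hI.eq_zero_of_mulVec_eq_self_of_sum_eq_zero hS (u := fun i ↦ (v i).re)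
    (funext fun i ↦ by rw [← re_map_ofReal_mulVec, hfix]) (by rw [← Complex.re_sum, hsum]; rfl)
  have him := hI.eq_zero_of_mulVec_eq_self_of_sum_eq_zero hS (u := fun i ↦ (v i).im)
    (funext fun i ↦ by rw [← im_map_ofReal_mulVec, hfix]) (by rw [← Complex.im_sum, hsum]; rfl)
  funext i
  exact Complex.ext (congrFun hre i) (congrFun him i)

theorem norm_le_one_of_map_ofReal_mulVec_eq_smul (hB : B ∈ colStochastic ℝ ι) {v : ι → ℂ}
    (hv : v ≠ 0) {μ : ℂ} (h : B.map Complex.ofReal *ᵥ v = μ • v) : ‖μ‖ ≤ 1 := by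
  have hpos : 0 < ∑ i, ‖v i‖ := by
    obtain ⟨i, hi⟩ := Function.ne_iff.1 hv
    exact sum_pos' (fun j _ ↦ norm_nonneg _) ⟨i, mem_univ i, norm_pos_iff.2 hi⟩
  refine le_of_mul_le_mul_right ?_ hpos
  calc ‖μ‖ * ∑ i, ‖v i‖ = ∑ i, ‖(B.map Complex.ofReal *ᵥ v) i‖ := by
        simp [h, mul_sum]
    _ ≤ ∑ i, (B *ᵥ fun j ↦ ‖v j‖) i :=
        sum_le_sum fun i _ ↦ norm_map_ofReal_mulVec_le hB.1 v i
    _ = 1 * ∑ i, ‖v i‖ := by rw [sum_mulVec_of_mem_colStochastic hB, one_mul]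

theorem exists_map_ofReal_mulVec_eq_smul_of_lazy {β : ℝ} (hβ : β ≠ 0) {v : ι → ℂ} {z : ℂ}
    (h : ((1 - β) • (1 : Matrix ι ι ℝ) + β • B).map Complex.ofReal *ᵥ v = z • v) :
    ∃ μ : ℂ, B.map Complex.ofReal *ᵥ v = μ • v ∧ z = (1 - β) • (1 : ℂ) + β • μ := by
  have hβ' : (β : ℂ) ≠ 0 := by exact_mod_cast hβ
  have hmap : ((1 - β) • (1 : Matrix ι ι ℝ) + β • B).map Complex.ofReal =
      ((1 - β : ℝ) : ℂ) • 1 + (β : ℂ) • B.map Complex.ofReal := by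
    ext i j
    by_cases hij : i = j <;> simp [hij]
  rw [hmap, add_mulVec, smul_mulVec, smul_mulVec, one_mulVec] at h
  refine ⟨(z - (1 - β)) / β, ?_, ?_⟩
  · ext i
    have hi := congrFun h i
    simp only [Pi.add_apply, Pi.smul_apply, smul_eq_mul] at hi ⊢
    field_simp
    push_cast at hi
    linear_combination hi
  · simp only [Complex.real_smul]
    field_simp
    push_cast
    ring

theorem IsIrreducible.norm_lt_one_of_mulVec_eq_smul (hI : B.IsIrreducible)
    (hS : B ∈ colStochastic ℝ ι) {β : ℝ} (hβ0 : 0 < β) (hβ1 : β < 1) {π : ι → ℝ}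
    (hπ : ∑ i, π i = 1) {v : ι → ℂ} (hv : v ≠ 0) {z : ℂ}
    (h : ((1 - β) • (1 : Matrix ι ι ℝ) + β • B - of fun i _ ↦ π i).map Complex.ofReal *ᵥ v =
      z • v) :
    ‖z‖ < 1 := by
  rcases eq_or_ne z 0 with rfl | hz
  · simp
  have hlazy : (1 - β) • (1 : Matrix ι ι ℝ) + β • B ∈ colStochastic ℝ ι :=
    convex_colStochastic (one_mem _) hS (by linarith) hβ0.le (by ring)
  rw [map_ofReal_sub_of] at h
  obtain ⟨hsum, hlazy_eig⟩ := sum_eq_zero_and_mulVec_eq_smul_of_sub_mulVec_eq_smul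
    (fun j ↦ by
      simp only [map_apply]
      rw [← Complex.ofReal_sum, sum_col_of_mem_colStochastic hlazy, Complex.ofReal_one])
    (by simp [← Complex.ofReal_sum, hπ]) hz h
  obtain ⟨μ, hB_eig, rfl⟩ := exists_map_ofReal_mulVec_eq_smul_of_lazy hβ0.ne' hlazy_eig
  have hμ_le : ‖μ‖ ≤ 1 := norm_le_one_of_map_ofReal_mulVec_eq_smul hS hv hB_eig
  have hμ_ne : (1 : ℂ) ≠ μ := by
    rintro rfl
    rw [one_smul] at hB_eig
    exact hv (hI.eq_zero_of_map_ofReal_mulVec_eq_self_of_sum_eq_zero hS hB_eig hsum)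
  exact norm_combo_lt_of_ne (by simp) hμ_le hμ_ne (by linarith) hβ0 (by ring)

end Matrix

theorem specRad_lt {n : ℕ} {M : Matrix (Fin n) (Fin n) ℝ} {r : ℝ} (hr : 0 < r)
    (h : ∀ (z : ℂ) (v : Fin n → ℂ), v ≠ 0 → M.map Complex.ofReal *ᵥ v = z • v → ‖z‖ < r) :
    specRad M < r := by
  set S := {x : ℝ | ∃ z ∈ (M.map (Complex.ofReal : ℝ → ℂ)).charpoly.roots, ‖z‖ = x}
  change sSup S < r
  rcases S.eq_empty_or_nonempty with hS | hS
  · rw [hS, Real.sSup_empty]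
    exact hr
  have hfin : S.Finite := (Multiset.finite_toSet _).image _
  refine (hfin.csSup_lt_iff hS).2 ?_
  rintro _ ⟨z, hz, rfl⟩
  obtain ⟨v, hv, hzv⟩ := exists_mulVec_eq_smul_of_mem_roots_charpoly hz
  exact h z v hv hzv

theorem stmt_3_general (n : ℕ) (B : Matrix (Fin n) (Fin n) ℝ) (β : ℝ)
    (hβ0 : 0 < β) (hβ1 : β < 1)
    (hB_nonneg : ∀ i j, 0 ≤ B i j)
    (hB_col : ∀ j, ∑ i, B i j = 1)
    (hB_irr : ∀ i j, ∃ k : ℕ, 0 < k ∧ 0 < (B ^ k) i j)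
    (π : Fin n → ℝ) (hπ_sum : ∑ i, π i = 1) :
    specRad ((1 - β) • (1 : Matrix (Fin n) (Fin n) ℝ) + β • B
      - Matrix.of (fun i _ => π i)) < 1 := by
  have hI : B.IsIrreducible := (isIrreducible_iff_exists_pow_pos hB_nonneg).2 hB_irr
  have hS : B ∈ colStochastic ℝ (Fin n) := mem_colStochastic_iff_sum.2 ⟨hB_nonneg, hB_col⟩
  exact specRad_lt one_pos fun z v hv h ↦
    hI.norm_lt_one_of_mulVec_eq_smul hS hβ0 hβ1 hπ_sum hv h

/-- For an irreducible column-stochastic matrix `B`, `β ∈ (0,1)`,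
`B_β = (1-β)I + βB`, and `π` the stochastic right eigenvector of `B`,
the spectral radius of `B_β - π𝟏ᵀ` is strictly less than 1. -/
theorem stmt_3 (n : ℕ) (hn : 1 ≤ n) (B : Matrix (Fin n) (Fin n) ℝ) (β : ℝ)
    (hβ0 : 0 < β) (hβ1 : β < 1)
    (hB_nonneg : ∀ i j, 0 ≤ B i j)
    (hB_col : ∀ j, ∑ i, B i j = 1)
    (hB_irr : ∀ i j, ∃ k : ℕ, 0 < k ∧ 0 < (B ^ k) i j)
    (π : Fin n → ℝ) (hπ_nonneg : ∀ i, 0 ≤ π i) (hπ_sum : ∑ i, π i = 1)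
    (hπB : Matrix.mulVec B π = π) :
    specRad ((1 - β) • (1 : Matrix (Fin n) (Fin n) ℝ) + β • B
      - Matrix.of (fun i _ => π i)) < 1 :=
  stmt_3_general n B β hβ0 hβ1 hB_nonneg hB_col hB_irr π hπ_sum
end

section
/- Let Ψ be a 3×3 real matrix with nonnegative entries that is irreducible, let λ* > 0, and suppose the diagonal entries satisfy Ψ_{ii} < λ* for i = 1,2,3. Then the spectral radius of Ψ satisfies ρ(Ψ) < λ* if and only if det(λ*·I₃ − Ψ) > 0. -/
open Polynomial Matrix

theorem Polynomial.Monic.exists_isRoot_ge_of_eval_nonpos {p : ℝ[X]} (hp : p.Monic) {c : ℝ}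
    (hc : p.eval c ≤ 0) : ∃ r, c ≤ r ∧ p.IsRoot r := by
  have hdeg : 0 < p.degree := hp.degree_pos.2 fun h ↦ by norm_num [h] at hc
  obtain ⟨b, hb0, hcb⟩ := (((tendsto_atTop_of_leadingCoeff_nonneg p hdeg
    (by rw [hp.leadingCoeff]; exact zero_le_one)).eventually_ge_atTop 0).and
    (Filter.eventually_ge_atTop c)).exists
  obtain ⟨r, hr, hr0⟩ := intermediate_value_Icc hcb p.continuous.continuousOn ⟨hc, hb0⟩
  exact ⟨r, hr.1, hr0⟩

section specRad

variable {n : ℕ} (M : Matrix (Fin n) (Fin n) ℝ)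

theorem finite_norm_roots_charpoly :
    {x : ℝ | ∃ z ∈ (M.map (Complex.ofReal : ℝ → ℂ)).charpoly.roots, ‖z‖ = x}.Finite :=
  ((M.map (Complex.ofReal : ℝ → ℂ)).charpoly.roots.toFinset.finite_toSet.image (‖·‖)).subset
    (by rintro _ ⟨z, hz, rfl⟩; exact ⟨z, by simpa using hz, rfl⟩)

theorem norm_le_specRad {z : ℂ} (hz : z ∈ (M.map (Complex.ofReal : ℝ → ℂ)).charpoly.roots) :
    ‖z‖ ≤ specRad M :=
  le_csSup (finite_norm_roots_charpoly M).bddAbove ⟨z, hz, rfl⟩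

theorem specRad_lt_of_forall_norm_lt [NeZero n] {c : ℝ}
    (h : ∀ z ∈ (M.map (Complex.ofReal : ℝ → ℂ)).charpoly.roots, ‖z‖ < c) : specRad M < c := by
  set p := (M.map (Complex.ofReal : ℝ → ℂ)).charpoly
  obtain ⟨z, hz⟩ := IsAlgClosed.exists_root p (by
    simp [p, charpoly_degree_eq_dim, NeZero.ne n])
  have hz : z ∈ p.roots := (mem_roots (charpoly_monic _).ne_zero).2 hz
  refine ((finite_norm_roots_charpoly M).csSup_lt_iff ⟨_, z, hz, rfl⟩).2 ?_
  rintro _ ⟨z, hz, rfl⟩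
  exact h z hz

theorem det_pos_of_specRad_lt {c : ℝ} (h : specRad M < c) :
    0 < (c • (1 : Matrix _ _ ℝ) - M).det := by
  by_contra! hdet
  rw [smul_one_eq_diagonal, ← scalar_apply, ← eval_charpoly] at hdet
  obtain ⟨r, hcr, hr⟩ := (charpoly_monic M).exists_isRoot_ge_of_eval_nonpos hdet
  have hroot : (r : ℂ) ∈ (M.map (Complex.ofReal : ℝ → ℂ)).charpoly.roots := by
    rw [show M.map Complex.ofReal = M.map Complex.ofRealHom from rfl, charpoly_map,
      mem_roots_map (charpoly_monic M).ne_zero]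
    exact (eval₂_at_apply Complex.ofRealHom r).trans (by rw [hr.eq_zero, map_zero])
  have := norm_le_specRad M hroot
  rw [Complex.norm_real, Real.norm_eq_abs] at this
  linarith [le_abs_self r]

end specRad

theorem Matrix.exists_mulVec_eq_smul_of_mem_roots_charpoly_s6 {K n : Type*} [Field K] [Fintype n]
    [DecidableEq n] {M : Matrix n n K} {z : K} (hz : z ∈ M.charpoly.roots) :
    ∃ x ≠ 0, M *ᵥ x = z • x := by
  have hdet : (scalar n z - M).det = 0 := by
    rw [← eval_charpoly]
    exact (mem_roots (charpoly_monic M).ne_zero).1 hz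
  obtain ⟨x, hx, hMx⟩ := exists_mulVec_eq_zero_iff.2 hdet
  refine ⟨x, hx, ?_⟩
  rw [sub_mulVec, sub_eq_zero, scalar_apply, ← smul_one_eq_diagonal, smul_mulVec,
    one_mulVec] at hMx
  exact hMx.symm

theorem Matrix.norm_mul_le_mulVec_norm {n : Type*} [Fintype n] {M : Matrix n n ℝ}
    (hM : ∀ i j, 0 ≤ M i j) {x : n → ℂ} {z : ℂ} (hx : M.map Complex.ofReal *ᵥ x = z • x)
    (i : n) : ‖z‖ * ‖x i‖ ≤ (M *ᵥ fun j ↦ ‖x j‖) i :=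
  calc ‖z‖ * ‖x i‖ = ‖∑ j, (M i j : ℂ) * x j‖ := by
        rw [← norm_mul, ← smul_eq_mul, ← Pi.smul_apply, ← hx]; rfl
    _ ≤ ∑ j, ‖(M i j : ℂ) * x j‖ := norm_sum_le _ _
    _ = _ := by simp [mulVec, dotProduct, abs_of_nonneg (hM i _)]

section OrderedRing

variable {R n : Type*} [CommRing R] [LinearOrder R] [IsStrictOrderedRing R] [Fintype n]
  [DecidableEq n]

theorem Matrix.nonpos_of_mulVec_nonpos {A : Matrix n n R} (hadj : ∀ i j, 0 ≤ A.adjugate i j)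
    (hdet : 0 < A.det) {u : n → R} (hu : A *ᵥ u ≤ 0) : u ≤ 0 := by
  intro i
  have hdet_mul : A.det * u i = (A.adjugate *ᵥ (A *ᵥ u)) i := by
    rw [mulVec_mulVec, adjugate_mul, smul_mulVec, one_mulVec]; rfl
  have hnonpos : (A.adjugate *ᵥ (A *ᵥ u)) i ≤ 0 :=
    Finset.sum_nonpos fun j _ ↦ mul_nonpos_of_nonneg_of_nonpos (hadj i j) (hu j)
  exact nonpos_of_mul_nonpos_right (hdet_mul ▸ hnonpos) hdet

theorem Matrix.adjugate_apply_self_pos {A : Matrix n n R} (hoff : ∀ i j, i ≠ j → A i j ≤ 0)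
    (hadj : ∀ i j, i ≠ j → 0 ≤ A.adjugate i j) (hdet : 0 < A.det) {i : n} (hii : 0 ≤ A i i) :
    0 < A.adjugate i i := by
  have hle : A.det ≤ A i i * A.adjugate i i := by
    rw [det_eq_sum_mul_adjugate_row A i, Fintype.sum_eq_add_sum_compl i]
    refine add_le_of_nonpos_right (Finset.sum_nonpos fun j hj ↦ ?_)
    have hji : j ≠ i := by simpa using hj
    exact mul_nonpos_of_nonpos_of_nonneg (hoff i j hji.symm) (hadj j i hji)
  exact pos_of_mul_pos_right (hdet.trans_le hle) hii

end OrderedRing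

section FinThree

variable {R : Type*} [CommRing R] [LinearOrder R] [IsStrictOrderedRing R]
  {A : Matrix (Fin 3) (Fin 3) R}

theorem Matrix.adjugate_apply_nonneg_of_fin_three (hoff : ∀ i j, i ≠ j → A i j ≤ 0)
    (hdiag : ∀ i, 0 ≤ A i i) {i j : Fin 3} (hij : i ≠ j) : 0 ≤ A.adjugate i j := by
  rw [adjugate_fin_three]
  fin_cases i <;> fin_cases j <;> simp only [ne_eq, not_true_eq_false] at hij <;>
    simp only [Fin.isValue, Fin.zero_eta, Fin.mk_one, Fin.reduceFinMk, of_apply, cons_val',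
      cons_val, cons_val_zero, cons_val_one, cons_val_fin_one] <;>
    nlinarith [hoff 0 1 (by decide), hoff 0 2 (by decide), hoff 1 0 (by decide),
      hoff 1 2 (by decide), hoff 2 0 (by decide), hoff 2 1 (by decide), hdiag 0, hdiag 1, hdiag 2]

theorem Matrix.adjugate_nonneg_of_fin_three (hoff : ∀ i j, i ≠ j → A i j ≤ 0)
    (hdiag : ∀ i, 0 ≤ A i i) (hdet : 0 < A.det) (i j : Fin 3) : 0 ≤ A.adjugate i j := by
  obtain rfl | hij := eq_or_ne i j
  · exact (adjugate_apply_self_pos hoff (fun _ _ ↦ adjugate_apply_nonneg_of_fin_three hoff hdiag)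
      hdet (hdiag i)).le
  · exact adjugate_apply_nonneg_of_fin_three hoff hdiag hij

end FinThree

theorem norm_lt_of_adjugate_sub_nonneg {n : Type*} [Fintype n] [DecidableEq n] {M : Matrix n n ℝ}
    (hM : ∀ i j, 0 ≤ M i j) {c : ℝ} (hadj : ∀ i j, 0 ≤ (c • (1 : Matrix n n ℝ) - M).adjugate i j)
    (hdet : 0 < (c • (1 : Matrix n n ℝ) - M).det) {z : ℂ}
    (hz : z ∈ (M.map (Complex.ofReal : ℝ → ℂ)).charpoly.roots) : ‖z‖ < c := by
  by_contra! hcz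
  obtain ⟨x, hx0, hx⟩ := exists_mulVec_eq_smul_of_mem_roots_charpoly_s6 hz
  have hu : (c • (1 : Matrix n n ℝ) - M) *ᵥ (fun j ↦ ‖x j‖) ≤ 0 := fun i ↦ by
    have := norm_mul_le_mulVec_norm hM hx i
    rw [sub_mulVec, smul_mulVec, one_mulVec, Pi.sub_apply, Pi.smul_apply, smul_eq_mul,
      Pi.zero_apply]
    nlinarith [norm_nonneg (x i)]
  refine hx0 (funext fun i ↦ norm_eq_zero.1 ?_)
  exact le_antisymm (nonpos_of_mulVec_nonpos hadj hdet hu i) (norm_nonneg _)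

theorem stmt_6_general (Ψ : Matrix (Fin 3) (Fin 3) ℝ)
    (h_nonneg : ∀ i j, 0 ≤ Ψ i j)
    (lamStar : ℝ) (hdiag : ∀ i, Ψ i i < lamStar) :
    specRad Ψ < lamStar ↔ 0 < (lamStar • (1 : Matrix (Fin 3) (Fin 3) ℝ) - Ψ).det := by
  refine ⟨det_pos_of_specRad_lt Ψ, fun hdet ↦ specRad_lt_of_forall_norm_lt Ψ fun z hz ↦ ?_⟩
  refine norm_lt_of_adjugate_sub_nonneg h_nonneg
    (adjugate_nonneg_of_fin_three (fun i j hij ↦ ?_) (fun i ↦ ?_) hdet) hdet hz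
  · simp [hij, h_nonneg]
  · simp [(hdiag i).le]

/-- For a nonnegative irreducible 3×3 matrix `Ψ` with diagonal entries
below `λ* > 0`, one has `ρ(Ψ) < λ*` if and only if `det(λ*·I₃ − Ψ) > 0`. -/
theorem stmt_6 (Ψ : Matrix (Fin 3) (Fin 3) ℝ)
    (h_nonneg : ∀ i j, 0 ≤ Ψ i j)
    (h_irr : ∀ i j, ∃ k : ℕ, 0 < k ∧ 0 < (Ψ ^ k) i j)
    (lamStar : ℝ) (hlam : 0 < lamStar) (hdiag : ∀ i, Ψ i i < lamStar) :
    specRad Ψ < lamStar ↔ 0 < (lamStar • (1 : Matrix (Fin 3) (Fin 3) ℝ) - Ψ).det :=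
  stmt_6_general Ψ h_nonneg lamStar hdiag
end
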